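/- arXiv:math/0609621 — 7 statements merged into one kernel-verified Lean document; each statement's English description precedes it below -/
import Mathlib

section
/- For any n-tuple (z_1,...,z_n) of complex numbers with |z_k| = 1 for all k, the maximum of |z_1^ν + z_2^ν + ... + z_n^ν| over ν = 1, ..., n²−n is at least √(n−1). -/
open Finset Complex
open scoped ComplexConjugate

/-!
With `a k μ = z k ^ μ` for `0 ≤ μ ≤ N`, the Gram matrices of the rows and of the columns of `a`
have the same Frobenius norm. A column Gram entry is a power sum `S (μ - ν)` or its conjugate, with
`n` on the diagonal, while each diagonal entry of the row Gram matrix is `N + 1`. If `|S ν| ≤ M` for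
`1 ≤ ν ≤ N`, comparing the two sides gives `n (N + 1) ≤ n ^ 2 + N M ^ 2`, and `N = n ^ 2 - n` turns
this into `n - 1 ≤ M ^ 2`.
-/

theorem sum_sq_norm_sum_mul_conj_comm {ι κ : Type*} [Fintype ι] [Fintype κ] (a : ι → κ → ℂ) :
    ∑ μ, ∑ ν, ‖∑ k, a k μ * conj (a k ν)‖ ^ 2 = ∑ j, ∑ k, ‖∑ μ, a j μ * conj (a k μ)‖ ^ 2 := by
  apply Complex.ofReal_injective
  push_cast
  simp only [← Complex.mul_conj', map_sum, map_mul, conj_conj, sum_mul_sum,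
    ← Fintype.sum_prod_type']
  exact Fintype.sum_equiv ((Equiv.prodAssoc _ _ _).symm.trans
    ((Equiv.prodComm _ _).trans (Equiv.prodAssoc _ _ _))) _ _ fun _ => by
    simp only [Equiv.trans_apply, Equiv.prodAssoc_symm_apply, Equiv.prodComm_apply,
      Prod.swap_prod_mk, Equiv.prodAssoc_apply]
    ring

theorem pow_mul_conj_pow_of_norm_eq_one {w : ℂ} (hw : ‖w‖ = 1) {μ ν : ℕ} (h : ν ≤ μ) :
    w ^ μ * conj (w ^ ν) = w ^ (μ - ν) := by
  rw [← Nat.sub_add_cancel h, pow_add, Nat.add_sub_cancel, mul_assoc, mul_conj', norm_pow, hw]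
  simp

section PowerSums

variable {ι : Type*} [Fintype ι] {z : ι → ℂ} {N : ℕ} {M : ℝ}

theorem norm_sum_pow_mul_conj_pow_le (hz : ∀ k, ‖z k‖ = 1)
    (hM : ∀ ν ∈ Icc 1 N, ‖∑ k, z k ^ ν‖ ≤ M) {μ ν : ℕ} (hμ : μ ≤ N) (hν : ν ≤ N)
    (hne : μ ≠ ν) : ‖∑ k, z k ^ μ * conj (z k ^ ν)‖ ≤ M := by
  wlog h : ν < μ generalizing μ ν
  · rw [← norm_conj]
    simpa only [map_sum, map_mul, conj_conj, mul_comm] using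
      this hν hμ hne.symm (by omega)
  rw [sum_congr rfl fun k _ => pow_mul_conj_pow_of_norm_eq_one (hz k) h.le]
  exact hM _ (mem_Icc.2 ⟨by omega, by omega⟩)

theorem card_mul_succ_le_of_norm_sum_pow_le (hz : ∀ k, ‖z k‖ = 1)
    (hM : ∀ ν ∈ Icc 1 N, ‖∑ k, z k ^ ν‖ ≤ M) :
    (Fintype.card ι : ℝ) * (N + 1) ≤ Fintype.card ι ^ 2 + N * M ^ 2 := by
  set n := Fintype.card ι
  let a : ι → Fin (N + 1) → ℂ := fun k μ => z k ^ (μ : ℕ)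
  have hdiag : ∀ (j : ι) (μ : ℕ), z j ^ μ * conj (z j ^ μ) = 1 := fun j μ => by
    simpa using pow_mul_conj_pow_of_norm_eq_one (hz j) le_rfl (μ := μ)
  have hlower : n * (N + 1 : ℝ) ^ 2 ≤ ∑ j, ∑ k, ‖∑ μ, a j μ * conj (a k μ)‖ ^ 2 := by
    calc n * (N + 1 : ℝ) ^ 2 = ∑ j, ‖∑ μ, a j μ * conj (a j μ)‖ ^ 2 := by
          simp only [a, hdiag, sum_const, card_univ, Fintype.card_fin, nsmul_eq_mul, mul_one,
            Complex.norm_natCast]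
          push_cast
          rfl
      _ ≤ _ := sum_le_sum fun j _ =>
          single_le_sum (f := fun k => ‖∑ μ, a j μ * conj (a k μ)‖ ^ 2)
            (fun _ _ => by positivity) (mem_univ j)
  have hrow : ∀ μ : Fin (N + 1),
      ∑ ν, ‖∑ k, a k μ * conj (a k ν)‖ ^ 2 ≤ n ^ 2 + N * M ^ 2 := fun μ => by
    rw [← add_sum_erase _ _ (mem_univ μ)]
    gcongr
    · simp only [a, hdiag]
      simp [n]
    · calc _ ≤ #(univ.erase μ) • M ^ 2 := sum_le_card_nsmul _ _ _ fun ν hν =>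
            pow_le_pow_left₀ (norm_nonneg _) (norm_sum_pow_mul_conj_pow_le hz hM
              (Nat.lt_succ_iff.1 μ.2) (Nat.lt_succ_iff.1 ν.2)
              (Fin.val_ne_of_ne (ne_of_mem_erase hν).symm)) 2
        _ = N * M ^ 2 := by simp [card_erase_of_mem]
  have hupper : ∑ μ, ∑ ν, ‖∑ k, a k μ * conj (a k ν)‖ ^ 2 ≤ (N + 1) * (n ^ 2 + N * M ^ 2) := by
    calc _ ≤ ∑ _ : Fin (N + 1), (n ^ 2 + N * M ^ 2 : ℝ) := sum_le_sum fun μ _ => hrow μ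
      _ = _ := by simp [mul_add]
  rw [sum_sq_norm_sum_mul_conj_comm] at hupper
  nlinarith

end PowerSums

theorem power_sum_lower_bound_general (n : ℕ) (z : Fin n → ℂ)
    (hz : ∀ k, ‖z k‖ = 1) :
    Real.sqrt ((n : ℝ) - 1) ≤
      sSup {x : ℝ | ∃ ν ∈ Finset.Icc 1 (n ^ 2 - n), x = ‖∑ k, z k ^ ν‖} := by
  set S := {x : ℝ | ∃ ν ∈ Finset.Icc 1 (n ^ 2 - n), x = ‖∑ k, z k ^ ν‖}
  have hbdd : BddAbove S :=
    ((Icc 1 (n ^ 2 - n)).finite_toSet.image fun ν => ‖∑ k, z k ^ ν‖).bddAbove.mono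
      (by rintro _ ⟨ν, hν, rfl⟩; exact ⟨ν, hν, rfl⟩)
  rw [Real.sqrt_le_iff]
  refine ⟨Real.sSup_nonneg (by rintro _ ⟨ν, -, rfl⟩; exact norm_nonneg _), ?_⟩
  rcases le_or_gt n 1 with hn | hn
  · have : (n : ℝ) ≤ 1 := by exact_mod_cast hn
    nlinarith [sq_nonneg (sSup S)]
  have key := card_mul_succ_le_of_norm_sum_pow_le hz fun ν hν => le_csSup hbdd ⟨ν, hν, rfl⟩
  rw [Fintype.card_fin, Nat.cast_sub (Nat.le_self_pow two_ne_zero n)] at key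
  push_cast at key
  have hn : (1 : ℝ) < n := by exact_mod_cast hn
  -- after cancelling `n ^ 2`, `key` says `n (n - 1) ^ 2 ≤ n (n - 1) M ^ 2`
  nlinarith [mul_pos (by positivity : (0 : ℝ) < n) (sub_pos.2 hn)]

theorem power_sum_lower_bound (n : ℕ) (hn : 1 ≤ n) (z : Fin n → ℂ)
    (hz : ∀ k, ‖z k‖ = 1) :
    Real.sqrt ((n : ℝ) - 1) ≤
      sSup {x : ℝ | ∃ ν ∈ Finset.Icc 1 (n ^ 2 - n), x = ‖∑ k, z k ^ ν‖} :=
  power_sum_lower_bound_general n z hz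
end

section
/- Let (z_1,...,z_n) be an n-tuple of unimodular complex numbers. If ∑_{k=1}^n z_k^ν = 0 for all ν = 1, ..., n−1, then there exists a complex number w with |w| = 1 such that {z_1, ..., z_n} is exactly the set of n-th roots of w; that is, the z_k are the vertices of a regular n-gon on the unit circle. -/
open Finset Polynomial

/-!
Newton's identities turn the vanishing of the power sums `p_1, …, p_{n-1}` into the vanishing
of the elementary symmetric functions `e_1, …, e_{n-1}`. By Vieta, `∏ (X - z_k)` is then
`X ^ n - w` with `w = (-1) ^ (n + 1) e_n`, so the `z_k` are exactly the `n`-th roots of `w`,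
and `|w| = |z_1| ^ n = 1`.
-/

theorem MvPolynomial.aeval_esymm_eq_zero_of_aeval_psum_eq_zero {σ R : Type*} [Fintype σ]
    [CommRing R] [IsDomain R] [CharZero R] {z : σ → R} {m : ℕ}
    (h : ∀ ν ∈ Icc 1 m, aeval z (psum σ R ν) = 0) {k : ℕ} (hk : k ∈ Icc 1 m) :
    aeval z (esymm σ R k) = 0 := by
  obtain ⟨hk1, hkm⟩ := mem_Icc.mp hk
  have newton := congrArg (aeval z) (mul_esymm_eq_sum σ R k)
  -- In Newton's identity for `k * e_k` every power sum has index in `[1, k]`, so it vanishes.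
  rw [map_mul, map_mul, map_sum, sum_eq_zero, mul_zero, map_natCast] at newton
  · exact (mul_eq_zero.mp newton).resolve_left (Nat.cast_ne_zero.mpr (by omega))
  · intro a ha
    rw [mem_filter, HasAntidiagonal.mem_antidiagonal] at ha
    rw [map_mul, h a.2 (mem_Icc.mpr ⟨by omega, by omega⟩), mul_zero]

theorem Multiset.prod_X_sub_C_eq_X_pow_sub_C {R : Type*} [CommRing R] {s : Multiset R}
    (hs : s ≠ 0) (h : ∀ k ∈ Icc 1 (card s - 1), s.esymm k = 0) :
    (s.map fun a => X - C a).prod = X ^ card s - C ((-1) ^ (card s + 1) * s.esymm (card s)) := by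
  obtain ⟨m, hm⟩ := Nat.exists_eq_add_one_of_ne_zero (card_pos.mpr hs).ne'
  rw [hm] at h ⊢
  rw [prod_X_sub_X_eq_sum_esymm, hm, sum_range_succ, sum_range_succ', Finset.sum_eq_zero]
  · have he0 : s.esymm 0 = 1 := by simp [esymm]
    simp only [he0, C_1, C_mul, C_pow, C_neg, pow_zero, tsub_zero, tsub_self]
    ring
  · intro j hj
    rw [h (j + 1) (mem_Icc.mpr ⟨by omega, by rw [Finset.mem_range] at hj; omega⟩)]
    simp

theorem Multiset.eq_nthRoots_of_esymm_eq_zero {R : Type*} [CommRing R] [IsDomain R]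
    {s : Multiset R} (hs : s ≠ 0) (h : ∀ k ∈ Icc 1 (card s - 1), s.esymm k = 0) :
    s = nthRoots (card s) ((-1) ^ (card s + 1) * s.esymm (card s)) := by
  conv_lhs => rw [← roots_multiset_prod_X_sub_C s, prod_X_sub_C_eq_X_pow_sub_C hs h]
  rfl

theorem regular_ngon_of_power_sums_vanish (n : ℕ) (hn : 1 ≤ n) (z : Fin n → ℂ)
    (hz : ∀ k, ‖z k‖ = 1)
    (hS : ∀ ν ∈ Finset.Icc 1 (n - 1), ∑ k, z k ^ ν = 0) :
    ∃ w : ℂ, ‖w‖ = 1 ∧ Set.range z = {x : ℂ | x ^ n = w} := by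
  set s : Multiset ℂ := univ.val.map z
  have hcard : Multiset.card s = n := by simp [s]
  have hesymm : ∀ k ∈ Icc 1 (Multiset.card s - 1), s.esymm k = 0 := by
    intro k hk
    rw [show s = univ.val.map z from rfl, ← MvPolynomial.aeval_esymm_eq_multiset_esymm (Fin n) ℂ]
    refine MvPolynomial.aeval_esymm_eq_zero_of_aeval_psum_eq_zero (fun ν hν => ?_) (hcard ▸ hk)
    simpa [MvPolynomial.psum] using hS ν hν
  have hs : s ≠ 0 := Multiset.card_pos.mp (by omega)
  have hroots := Multiset.eq_nthRoots_of_esymm_eq_zero hs hesymm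
  rw [hcard] at hroots
  have hmem : ∀ x, x ∈ Set.range z ↔ x ^ n = (-1) ^ (n + 1) * s.esymm n := by
    intro x
    rw [← mem_nthRoots hn, ← hroots]
    simp [s]
  refine ⟨_, ?_, Set.ext hmem⟩
  rw [← (hmem (z ⟨0, hn⟩)).mp ⟨_, rfl⟩, norm_pow, hz, one_pow]
end

section
/- Let q be a prime power. Then there exists a perfect difference set of order q: integers a_1, ..., a_{q+1} such that the q² + q differences a_i − a_j for i ≠ j represent each nonzero residue class modulo q² + q + 1 exactly once. -/
/-!
Singer's construction. Let `K / F` be a cubic extension of finite fields, `|F| = q`. The points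
of the projective plane `ℙ_F(K)` form the cyclic group `Kˣ ⧸ Fˣ` of order `q² + q + 1`, and a
plane `W ⊆ K` gives a line `D` in it. For `θ ∉ F` the lines `W` and `θ W` differ (a `θ`-stable `W`
would be a module over `F(θ) = K`), so they meet in exactly one point: `θ` is a quotient of two
points of `D` in exactly one way. Counting these quotients gives `|D| (|D| - 1) = q² + q`, hence
`|D| = q + 1`.
-/

open Finset Module

theorem Nat.eq_add_one_of_mul_sub_one_eq {d q : ℕ} (hq : 0 < q) (h : d * (d - 1) = q * (q + 1)) :
    d = q + 1 := by
  obtain ⟨e, rfl⟩ : ∃ e, d = e + 1 := Nat.exists_eq_add_one.2 <| Nat.pos_of_ne_zero <| by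
    rintro rfl; simp at h; omega
  rw [Nat.add_sub_cancel] at h
  rcases lt_trichotomy e q with hlt | rfl | hgt
  · nlinarith
  · rfl
  · nlinarith

section DifferenceSet

variable {G : Type*} [Group G]

def IsPerfectDifferenceSet (D : Finset G) : Prop :=
  ∀ g ≠ (1 : G), ∃! p : G × G, p ∈ D ×ˢ D ∧ p.1 * p.2⁻¹ = g

theorem IsPerfectDifferenceSet.card_mul_card_sub_one [Finite G] {D : Finset G}
    (hD : IsPerfectDifferenceSet D) : #D * (#D - 1) = Nat.card G - 1 := by
  classical
  have := Fintype.ofFinite G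
  have hbij : #D.offDiag = #(univ.erase (1 : G)) := by
    refine Finset.card_bij (fun p _ ↦ p.1 * p.2⁻¹) ?_ ?_ ?_
    · intro p hp
      simpa [mul_inv_eq_one] using (mem_offDiag.1 hp).2.2
    · intro p hp p' hp' h
      have hp := mem_offDiag.1 hp
      obtain ⟨r, -, huniq⟩ := hD (p.1 * p.2⁻¹) (by simpa [mul_inv_eq_one] using hp.2.2)
      have hp' := mem_offDiag.1 hp'
      exact (huniq p ⟨mem_product.2 ⟨hp.1, hp.2.1⟩, rfl⟩).trans
        (huniq p' ⟨mem_product.2 ⟨hp'.1, hp'.2.1⟩, h.symm⟩).symm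
    · intro g hg
      have hg1 := ne_of_mem_erase hg
      obtain ⟨p, ⟨hp, rfl⟩, -⟩ := hD g hg1
      refine ⟨p, mem_offDiag.2 ⟨(mem_product.1 hp).1, (mem_product.1 hp).2, ?_⟩, rfl⟩
      simpa [mul_inv_eq_one] using hg1
  rwa [offDiag_card, card_erase_of_mem (mem_univ _), card_univ, ← Nat.card_eq_fintype_card,
    ← Nat.mul_sub_one] at hbij

theorem IsPerfectDifferenceSet.exists_int_of_mulEquiv {n : ℕ} [NeZero n] {D : Finset G}
    (hD : IsPerfectDifferenceSet D) (e : G ≃* Multiplicative (ZMod n)) :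
    ∃ a : Fin #D → ℤ, ∀ c : ZMod n, c ≠ 0 →
      ∃! p : Fin #D × Fin #D, p.1 ≠ p.2 ∧ ((a p.1 - a p.2 : ℤ) : ZMod n) = c := by
  set d : Fin #D ≃ D := D.equivFin.symm
  have hdiff : ∀ (i j : Fin #D) (c : ZMod n),
      ((((e (d i)).toAdd.val : ℤ) - ((e (d j)).toAdd.val : ℤ) : ℤ) : ZMod n) = c ↔
        (d i : G) * (d j : G)⁻¹ = e.symm (.ofAdd c) := by
    intro i j c
    rw [MulEquiv.eq_symm_apply, ← Multiplicative.toAdd.apply_eq_iff_eq]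
    push_cast
    simp [sub_eq_add_neg]
  refine ⟨fun i ↦ (e (d i)).toAdd.val, fun c hc ↦ ?_⟩
  simp only [hdiff]
  have hg : e.symm (.ofAdd c) ≠ 1 := by simpa using hc
  obtain ⟨⟨x, y⟩, ⟨hxy, hxy_eq⟩, huniq⟩ := hD _ hg
  rw [mem_product] at hxy
  refine ⟨(d.symm ⟨x, hxy.1⟩, d.symm ⟨y, hxy.2⟩), ⟨?_, by simpa using hxy_eq⟩, ?_⟩
  · intro h
    apply hg
    rw [← hxy_eq, mul_inv_eq_one]
    simpa using congrArg (fun i ↦ (d i : G)) h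
  · rintro ⟨i, j⟩ ⟨-, hij⟩
    have := huniq (d i, d j) ⟨mem_product.2 ⟨(d i).2, (d j).2⟩, hij⟩
    simp only [Prod.mk.injEq] at this
    ext <;> simp [← this.1, ← this.2]

end DifferenceSet

section FieldExtension

variable {F K : Type*} [Field F] [Field K] [Algebra F K]

theorem Submodule.eq_bot_or_eq_top_of_mul_mem {θ : K} (hK : (finrank F K).Prime)
    (hθ : θ ∉ Set.range (algebraMap F K)) {W : Submodule F K} (hW : ∀ x ∈ W, θ * x ∈ W) :
    W = ⊥ ∨ W = ⊤ := by
  have hadjoin : Algebra.adjoin F {θ} = ⊤ :=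
    ((Subalgebra.isSimpleOrder_of_finrank_prime F K hK).eq_bot_or_eq_top _).resolve_left
      fun h ↦ hθ (Algebra.mem_bot.1 (h ▸ Algebra.self_mem_adjoin_singleton F θ))
  have hmul (a : K) : ∀ x ∈ W, a * x ∈ W := by
    have ha : a ∈ Algebra.adjoin F {θ} := hadjoin ▸ Algebra.mem_top
    induction ha using Algebra.adjoin_induction with
    | mem a ha => rw [Set.mem_singleton_iff.1 ha]; exact hW
    | algebraMap r => exact fun x hx ↦ by simpa [Algebra.smul_def] using W.smul_mem r hx
    | add a b _ _ ha hb => exact fun x hx ↦ by simpa [add_mul] using W.add_mem (ha x hx) (hb x hx)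
    | mul a b _ _ ha hb => exact fun x hx ↦ by simpa [mul_assoc] using ha _ (hb x hx)
  refine (eq_or_ne W ⊥).imp_right fun hW0 ↦ ?_
  obtain ⟨x, hx, hx0⟩ := Submodule.exists_mem_ne_zero_of_ne_bot hW0
  exact eq_top_iff.2 fun a _ ↦ by simpa [hx0] using hmul (a * x⁻¹) x hx

theorem finrank_inf_map_mulLeft_eq_one (h3 : finrank F K = 3) {W : Submodule F K}
    (hW : finrank F W = 2) {θ : K} (hθ : θ ∉ Set.range (algebraMap F K)) :
    finrank F ↥(W ⊓ W.map (LinearMap.mulLeft F θ)) = 1 := by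
  have : FiniteDimensional F K := .of_finrank_eq_succ h3
  have hθ0 : θ ≠ 0 := fun h ↦ hθ ⟨0, by simp [h]⟩
  set θW := W.map (LinearMap.mulLeft F θ)
  have hθW : finrank F θW = 2 :=
    hW ▸ (Submodule.equivMapOfInjective _ (mul_right_injective₀ hθ0) W).finrank_eq.symm
  have hsup : finrank F ↥(W ⊔ θW) ≤ 3 := h3 ▸ Submodule.finrank_le _
  have hdim := Submodule.finrank_sup_add_finrank_inf_eq W θW
  by_contra hne
  have hinf : W ⊓ θW = W := Submodule.eq_of_le_of_finrank_le inf_le_left (by omega)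
  have hWθW : W = θW := Submodule.eq_of_le_of_finrank_le (hinf ▸ inf_le_right) (by omega)
  rcases Submodule.eq_bot_or_eq_top_of_mul_mem (W := W) (h3 ▸ Nat.prime_three) hθ
    (fun x hx ↦ by rw [hWθW]; exact ⟨x, hx, rfl⟩) with h | h
  · rw [h, finrank_bot] at hW; omega
  · rw [h, finrank_top, h3] at hW; omega

variable (F K) in
abbrev scalarUnits : Subgroup Kˣ :=
  (Units.map (algebraMap F K : F →* K)).range

theorem mem_scalarUnits {x : Kˣ} :
    x ∈ scalarUnits F K ↔ (x : K) ∈ Set.range (algebraMap F K) := by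
  refine ⟨fun ⟨u, hu⟩ ↦ ⟨u, by simp [← hu]⟩, fun ⟨a, ha⟩ ↦ ?_⟩
  have ha0 : a ≠ 0 := by rintro rfl; exact x.ne_zero (by simpa using ha.symm)
  exact ⟨Units.mk0 a ha0, Units.ext (by simpa using ha)⟩

theorem natCard_quotient_scalarUnits [Finite K] (h3 : finrank F K = 3) :
    Nat.card (Kˣ ⧸ scalarUnits F K) = Nat.card F ^ 2 + Nat.card F + 1 := by
  have : FiniteDimensional F K := .of_finrank_eq_succ h3
  have : Finite F := Finite.of_injective _ (algebraMap F K).injective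
  have hq : 1 < Nat.card F := Finite.one_lt_card
  have hH : Nat.card (scalarUnits F K) = Nat.card F - 1 := by
    rw [← Nat.card_congr (MonoidHom.ofInjective
      (Units.map_injective (f := (algebraMap F K : F →* K)) (algebraMap F K).injective)).toEquiv,
      Nat.card_units]
  have hLagrange := Subgroup.card_eq_card_quotient_mul_card_subgroup (scalarUnits F K)
  rw [Nat.card_units, Module.natCard_eq_pow_finrank (K := F), h3, hH] at hLagrange
  obtain ⟨r, hr⟩ : ∃ r, Nat.card F = r + 2 := ⟨Nat.card F - 2, by omega⟩
  rw [hr, show r + 2 - 1 = r + 1 by omega] at hLagrange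
  rw [hr]
  refine Nat.eq_of_mul_eq_mul_right r.add_one_pos (hLagrange.symm.trans ?_)
  exact Nat.sub_eq_of_eq_add (by ring)

theorem mk_eq_mk_of_mem_of_finrank_eq_one {V : Submodule F K} (hV : finrank F V = 1) {x y : Kˣ}
    (hx : (x : K) ∈ V) (hy : (y : K) ∈ V) : (x : Kˣ ⧸ scalarUnits F K) = y := by
  obtain ⟨c, hc⟩ := exists_smul_eq_of_finrank_eq_one hV (x := ⟨x, hx⟩)
    (by simp [Submodule.mk_eq_zero]) ⟨y, hy⟩
  rw [QuotientGroup.eq, mem_scalarUnits]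
  refine ⟨c, ?_⟩
  have hc : algebraMap F K c * x = y := by simpa [Algebra.smul_def] using congrArg Subtype.val hc
  rw [Units.val_mul, ← hc, Units.val_inv_eq_inv_val]
  field_simp

theorem mem_map_mulLeft_of_mk_eq_mul_mk {W : Submodule F K} {x y θ : Kˣ} (hy : (y : K) ∈ W)
    (h : (x : Kˣ ⧸ scalarUnits F K) = θ * y) :
    (x : K) ∈ W.map (LinearMap.mulLeft F (θ : K)) := by
  rw [← QuotientGroup.mk_mul, eq_comm, QuotientGroup.eq, mem_scalarUnits] at h
  obtain ⟨c, hc⟩ := h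
  refine ⟨c • y, W.smul_mem c hy, ?_⟩
  simp only [LinearMap.mulLeft_apply, Algebra.smul_def, hc, mul_inv_rev, Units.val_mul,
    Units.val_inv_eq_inv_val]
  field_simp

variable (F) in
noncomputable def singerSet [Finite K] (W : Submodule F K) : Finset (Kˣ ⧸ scalarUnits F K) :=
  (Set.toFinite (QuotientGroup.mk '' {x : Kˣ | (x : K) ∈ W})).toFinset

theorem mem_singerSet [Finite K] {W : Submodule F K} {g : Kˣ ⧸ scalarUnits F K} :
    g ∈ singerSet F W ↔ ∃ x : Kˣ, (x : K) ∈ W ∧ (x : Kˣ ⧸ scalarUnits F K) = g := by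
  simp [singerSet]

theorem isPerfectDifferenceSet_singerSet [Finite K] (h3 : finrank F K = 3) {W : Submodule F K}
    (hW : finrank F W = 2) : IsPerfectDifferenceSet (singerSet F W) := by
  intro g hg
  obtain ⟨θ, rfl⟩ := QuotientGroup.mk_surjective g
  have hθ : (θ : K) ∉ Set.range (algebraMap F K) := fun h ↦
    hg ((QuotientGroup.eq_one_iff θ).2 (mem_scalarUnits.2 h))
  set V := W ⊓ W.map (LinearMap.mulLeft F (θ : K))
  have hV : finrank F V = 1 := finrank_inf_map_mulLeft_eq_one h3 hW hθ
  have := Module.nontrivial_of_finrank_eq_succ hV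
  obtain ⟨⟨v, hvW, hvθW⟩, hv0⟩ := exists_ne (0 : V)
  obtain ⟨u, huW, rfl⟩ := Submodule.mem_map.1 hvθW
  have hu0 : u ≠ 0 := by rintro rfl; simp at hv0
  refine ⟨(θ * Units.mk0 u hu0, Units.mk0 u hu0), ⟨?_, by simp⟩, ?_⟩
  · exact mem_product.2 ⟨mem_singerSet.2 ⟨_, hvW, rfl⟩, mem_singerSet.2 ⟨_, huW, rfl⟩⟩
  · rintro ⟨a, b⟩ ⟨hab, hdiff⟩
    obtain ⟨⟨x, hxW, rfl⟩, ⟨y, hyW, rfl⟩⟩ :=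
      And.imp mem_singerSet.1 mem_singerSet.1 (mem_product.1 hab)
    rw [mul_inv_eq_iff_eq_mul] at hdiff
    have hx : (x : Kˣ ⧸ scalarUnits F K) = ↑(θ * Units.mk0 u hu0) :=
      mk_eq_mk_of_mem_of_finrank_eq_one hV
        ⟨hxW, mem_map_mulLeft_of_mk_eq_mul_mk hyW hdiff⟩ ⟨hvW, hvθW⟩
    refine Prod.ext hx ?_
    simpa [hx] using hdiff.symm

theorem exists_int_perfectDifferenceSet_of_finrank_eq_three [Finite K] (h3 : finrank F K = 3) :
    ∃ a : Fin (Nat.card F + 1) → ℤ,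
      ∀ c : ZMod (Nat.card F ^ 2 + Nat.card F + 1), c ≠ 0 →
      ∃! p : Fin (Nat.card F + 1) × Fin (Nat.card F + 1),
        p.1 ≠ p.2 ∧ ((a p.1 - a p.2 : ℤ) : ZMod (Nat.card F ^ 2 + Nat.card F + 1)) = c := by
  have : FiniteDimensional F K := .of_finrank_eq_succ h3
  obtain ⟨b, hb⟩ := exists_linearIndependent_of_le_finrank (R := F) (M := K) (n := 2) (by omega)
  set W := Submodule.span F (Set.range b)
  have hW : finrank F W = 2 := by simpa using finrank_span_eq_card hb
  have hD := isPerfectDifferenceSet_singerSet h3 hW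
  have hG := natCard_quotient_scalarUnits h3
  have : Finite F := Finite.of_injective _ (algebraMap F K).injective
  have hcard : #(singerSet F W) = Nat.card F + 1 := by
    refine Nat.eq_add_one_of_mul_sub_one_eq Nat.card_pos ?_
    rw [hD.card_mul_card_sub_one, hG]
    ring_nf; omega
  have : IsCyclic (Kˣ ⧸ scalarUnits F K) :=
    isCyclic_of_surjective _ (QuotientGroup.mk'_surjective _)
  have e : Kˣ ⧸ scalarUnits F K ≃* Multiplicative (ZMod (Nat.card F ^ 2 + Nat.card F + 1)) :=
    mulEquivOfCyclicCardEq (by simp [hG])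
  exact hcard ▸ hD.exists_int_of_mulEquiv e

end FieldExtension

/-- Singer's theorem: existence of perfect difference sets of prime power order. -/
theorem singer_perfect_difference_set (q : ℕ) (hq : IsPrimePow q) :
    ∃ a : Fin (q + 1) → ℤ,
      ∀ c : ZMod (q ^ 2 + q + 1), c ≠ 0 →
        ∃! p : Fin (q + 1) × Fin (q + 1),
          p.1 ≠ p.2 ∧ ((a p.1 - a p.2 : ℤ) : ZMod (q ^ 2 + q + 1)) = c := by
  obtain ⟨p, k, hp, hk, rfl⟩ := hq
  have := Fact.mk hp.nat_prime
  have hF : Nat.card (GaloisField p k) = p ^ k := GaloisField.card p k hk.ne'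
  have := exists_int_perfectDifferenceSet_of_finrank_eq_three
    (FiniteField.finrank_extension (GaloisField p k) p 3)
  rwa [hF] at this
end

section
/- Let (z_1,...,z_n) be unimodular complex numbers with |∑_{k=1}^n z_k^ν| = √(n−1) for all ν = 1, ..., n²−n. Then there exist a complex number α with |α| = 1 and integers a_1, ..., a_n forming a perfect difference set of order n−1 modulo n²−n+1, such that z_k = α·e^{2πi a_k/(n²−n+1)} for each k. -/
/-! With `N = n² - n + 1`, the `N` unimodular numbers `1` and `z_j * conj z_k` (`j ≠ k`) have
vanishing power sums of orders `1, …, N - 1`, because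
`|∑ z_k ^ ν|² = n + ∑_{j ≠ k} (z_j * conj z_k) ^ ν`. So the square matrix `(w_i ^ ν)_{ν < N}` of
these numbers `w_i` has orthogonal rows of length `√N`, hence also orthogonal columns:
`∑_{ν < N} (conj w_x * w_y) ^ ν = 0` for `x ≠ y`. Therefore the `w_i` are pairwise distinct
`N`-th roots of unity, i.e. all of them, each once. Writing `z_k = z_0 * exp (2πi a_k / N)`, the
differences `a_j - a_k` thus hit every nonzero residue mod `N` exactly once. -/

open Finset Complex Real
open scoped ComplexConjugate Matrix

section PowerSums

variable {ι : Type*} [Fintype ι] {w : ι → ℂ}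

theorem sum_zpow_eq_zero (hw : ∀ i, ‖w i‖ = 1)
    (hs : ∀ s, 0 < s → s < Fintype.card ι → ∑ i, w i ^ s = 0)
    {k : ℤ} (hk0 : k ≠ 0) (hk : |k| < Fintype.card ι) : ∑ i, w i ^ k = 0 := by
  obtain ⟨m, rfl | rfl⟩ := Int.eq_nat_or_neg k
  · simp only [zpow_natCast]
    exact hs m (by omega) (by simpa using hk)
  · have hconj : ∀ i, w i ^ (-(m : ℤ)) = conj (w i ^ m) := fun i => by
      rw [zpow_neg, zpow_natCast, Complex.inv_eq_conj (by rw [norm_pow, hw i, one_pow])]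
    simp only [hconj, ← map_sum, hs m (by omega) (by simpa using hk), map_zero]

variable (w) in
def powerMatrix (N : ℕ) : Matrix (Fin N) ι ℂ := Matrix.of fun ν i => w i ^ (ν : ℕ)

theorem powerMatrix_mul_conjTranspose [DecidableEq ι] (hw : ∀ i, ‖w i‖ = 1)
    (hs : ∀ s, 0 < s → s < Fintype.card ι → ∑ i, w i ^ s = 0) :
    powerMatrix w (Fintype.card ι) * (powerMatrix w (Fintype.card ι))ᴴ =
      (Fintype.card ι : ℂ) • 1 := by
  ext ν μ
  have hentry : ∀ i, w i ^ (ν : ℕ) * star (w i ^ (μ : ℕ)) = w i ^ ((ν : ℤ) - μ) := fun i => by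
    rw [star_def, map_pow, ← Complex.inv_eq_conj (hw i),
      zpow_sub₀ (norm_ne_zero_iff.mp (by simp [hw i])), zpow_natCast, zpow_natCast, inv_pow,
      div_eq_mul_inv]
  simp only [Matrix.mul_apply, powerMatrix, Matrix.conjTranspose_apply, Matrix.of_apply, hentry,
    Matrix.smul_apply, Matrix.one_apply, smul_eq_mul]
  split_ifs with h
  · simp [h]
  · have hν := ν.isLt
    have hμ := μ.isLt
    rw [sum_zpow_eq_zero hw hs (by omega) (abs_sub_lt_iff.mpr ⟨by omega, by omega⟩), mul_zero]

theorem conjTranspose_mul_powerMatrix [DecidableEq ι] (hw : ∀ i, ‖w i‖ = 1)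
    (hs : ∀ s, 0 < s → s < Fintype.card ι → ∑ i, w i ^ s = 0) :
    (powerMatrix w (Fintype.card ι))ᴴ * powerMatrix w (Fintype.card ι) =
      (Fintype.card ι : ℂ) • 1 := by
  rcases isEmpty_or_nonempty ι with hι | hι
  · exact Subsingleton.elim _ _
  have hN : (Fintype.card ι : ℂ) ≠ 0 := Nat.cast_ne_zero.mpr Fintype.card_ne_zero
  have h := powerMatrix_mul_conjTranspose hw hs
  rw [← inv_smul_eq_iff₀ hN, ← Matrix.mul_smul] at h
  rw [← inv_smul_eq_iff₀ hN, ← Matrix.smul_mul]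
  exact (Matrix.mul_eq_one_comm_of_equiv (Fintype.equivFin ι).symm).mp h

theorem sum_range_conj_mul_pow_eq_zero (hw : ∀ i, ‖w i‖ = 1)
    (hs : ∀ s, 0 < s → s < Fintype.card ι → ∑ i, w i ^ s = 0) {x y : ι} (hxy : x ≠ y) :
    ∑ ν ∈ range (Fintype.card ι), (conj (w x) * w y) ^ ν = 0 := by
  classical
  have h := congr_fun₂ (conjTranspose_mul_powerMatrix hw hs) x y
  simp only [Matrix.mul_apply, powerMatrix, Matrix.conjTranspose_apply, Matrix.of_apply,
    Matrix.smul_apply, Matrix.one_apply_ne hxy, smul_zero, star_def, map_pow, ← mul_pow] at h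
  rwa [Fin.sum_univ_eq_sum_range (fun ν => (conj (w x) * w y) ^ ν)] at h

theorem injective_of_sum_pow_eq_zero (hw : ∀ i, ‖w i‖ = 1)
    (hs : ∀ s, 0 < s → s < Fintype.card ι → ∑ i, w i ^ s = 0) : Function.Injective w := by
  intro x y hxy
  by_contra hne
  have h := sum_range_conj_mul_pow_eq_zero hw hs hne
  rw [← hxy, Complex.conj_mul', hw x] at h
  simp only [ofReal_one, one_pow, sum_const, card_range, nsmul_eq_mul, mul_one,
    Nat.cast_eq_zero] at h
  exact (Fintype.card_pos_iff.mpr ⟨x⟩).ne' h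

theorem conj_mul_pow_card_eq_one (hw : ∀ i, ‖w i‖ = 1)
    (hs : ∀ s, 0 < s → s < Fintype.card ι → ∑ i, w i ^ s = 0) (x y : ι) :
    (conj (w x) * w y) ^ Fintype.card ι = 1 := by
  rcases eq_or_ne x y with rfl | hxy
  · simp [Complex.conj_mul', hw x]
  have hne : conj (w x) * w y ≠ 1 := fun h => hxy <| injective_of_sum_pow_eq_zero hw hs <| by
    rw [← Complex.inv_eq_conj (hw x)] at h
    exact (inv_mul_eq_one₀ (norm_ne_zero_iff.mp (by simp [hw x]))).mp h
  have h := sum_range_conj_mul_pow_eq_zero hw hs hxy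
  rw [geom_sum_eq hne, div_eq_zero_iff, sub_eq_zero, sub_eq_zero] at h
  exact h.resolve_right hne

end PowerSums

theorem ZMod.exists_intCast_stdAddChar_eq {N : ℕ} [NeZero N] {u : ℂ} (hu : u ^ N = 1) :
    ∃ j : ℤ, ZMod.stdAddChar (j : ZMod N) = u := by
  obtain ⟨i, -, rfl⟩ := (Complex.isPrimitiveRoot_exp N (NeZero.ne N)).eq_pow_of_pow_eq_one hu
  refine ⟨i, ?_⟩
  rw [ZMod.stdAddChar_coe, ← Complex.exp_nat_mul]
  push_cast
  ring_nf

section Ratios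

variable {κ : Type*}

/-- Ordered pairs of distinct indices, plus `none` standing for the whole diagonal. -/
abbrev PairIndex (κ : Type*) := Option {p : κ × κ // p.1 ≠ p.2}

def ratioFamily (z : κ → ℂ) : PairIndex κ → ℂ
  | none => 1
  | some p => z p.1.1 * conj (z p.1.2)

def differenceFamily {G : Type*} [AddGroup G] (a : κ → G) : PairIndex κ → G
  | none => 0
  | some p => a p.1.1 - a p.1.2

theorem card_pairIndex [Fintype κ] [DecidableEq κ] :
    Fintype.card (PairIndex κ) = Fintype.card κ ^ 2 - Fintype.card κ + 1 := by
  have hoff : ({p : κ × κ | p.1 ≠ p.2} : Finset (κ × κ)) = univ.offDiag := by ext; simp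
  rw [Fintype.card_option, Fintype.card_subtype, hoff, offDiag_card, card_univ, sq]

theorem norm_ratioFamily {z : κ → ℂ} (hz : ∀ k, ‖z k‖ = 1) (o : PairIndex κ) :
    ‖ratioFamily z o‖ = 1 := by
  cases o <;> simp [ratioFamily, hz]

theorem sum_ratioFamily_pow [Fintype κ] [DecidableEq κ] {z : κ → ℂ} (hz : ∀ k, ‖z k‖ = 1) (s : ℕ) :
    ∑ o, ratioFamily z o ^ s = (‖∑ k, z k ^ s‖ ^ 2 : ℝ) - Fintype.card κ + 1 := by
  have hpairs : ∑ p ∈ univ ×ˢ univ, (z p.1 * conj (z p.2)) ^ s = (‖∑ k, z k ^ s‖ ^ 2 : ℝ) := by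
    rw [sum_product]
    simp only [mul_pow, ← map_pow]
    rw [← Finset.sum_mul_sum, ← map_sum, Complex.mul_conj', ofReal_pow]
  have hdiag : ∑ p ∈ (univ : Finset κ).diag, (z p.1 * conj (z p.2)) ^ s = Fintype.card κ := by
    rw [sum_congr rfl fun p hp => by rw [(mem_diag.mp hp).2, Complex.mul_conj', hz]]
    simp
  have hoff : ∑ p : {p : κ × κ // p.1 ≠ p.2}, (z p.1.1 * conj (z p.1.2)) ^ s =
      ∑ p ∈ (univ : Finset κ).offDiag, (z p.1 * conj (z p.2)) ^ s :=
    (sum_subtype univ.offDiag (p := fun p : κ × κ => p.1 ≠ p.2) (by simp)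
      fun p => (z p.1 * conj (z p.2)) ^ s).symm
  rw [← diag_union_offDiag, sum_union (disjoint_diag_offDiag _), hdiag, ← hoff] at hpairs
  simp only [ratioFamily, Fintype.sum_option, one_pow]
  linear_combination hpairs

theorem ratioFamily_eq_stdAddChar_comp {N : ℕ} [NeZero N] {z : κ → ℂ} {α : ℂ} {c : κ → ZMod N}
    (hα : ‖α‖ = 1) (hz : ∀ k, z k = α * ZMod.stdAddChar (c k)) :
    ratioFamily z = ZMod.stdAddChar ∘ differenceFamily c := by
  have he : ∀ x : ZMod N, conj (ZMod.stdAddChar x) = (ZMod.stdAddChar x)⁻¹ := fun x =>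
    (Complex.inv_eq_conj (Circle.norm_coe _)).symm
  funext o
  rcases o with _ | ⟨⟨j, k⟩, -⟩
  · simp [ratioFamily, differenceFamily]
  · simp only [ratioFamily, differenceFamily, Function.comp_apply, hz, map_mul, he,
      AddChar.map_sub_eq_div, mul_mul_mul_comm, Complex.mul_conj', hα]
    simp [div_eq_mul_inv]

theorem exists_eq_mul_stdAddChar {N : ℕ} [NeZero N] {z : κ → ℂ} (hz : ∀ k, ‖z k‖ = 1)
    (hroot : ∀ o, ratioFamily z o ^ N = 1) :
    ∃ (α : ℂ) (c : κ → ℤ), ‖α‖ = 1 ∧ ∀ k, z k = α * ZMod.stdAddChar (c k : ZMod N) := by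
  rcases isEmpty_or_nonempty κ with hκ | ⟨⟨k₀⟩⟩
  · exact ⟨1, 0, norm_one, isEmptyElim⟩
  have hroot₀ : ∀ k, (z k * conj (z k₀)) ^ N = 1 := by
    intro k
    rcases eq_or_ne k k₀ with rfl | hk
    · simp [Complex.mul_conj', hz]
    · exact hroot (some ⟨(k, k₀), hk⟩)
  choose c hc using fun k => ZMod.exists_intCast_stdAddChar_eq (hroot₀ k)
  refine ⟨z k₀, c, hz k₀, fun k => ?_⟩
  rw [hc, mul_left_comm, Complex.mul_conj', hz]
  simp

theorem existsUnique_sub_eq_of_bijective {G : Type*} [AddGroup G] {a : κ → G}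
    (h : Function.Bijective (differenceFamily a)) {c : G} (hc : c ≠ 0) :
    ∃! p : κ × κ, p.1 ≠ p.2 ∧ a p.1 - a p.2 = c := by
  obtain ⟨o, ho⟩ := h.surjective c
  rcases o with _ | ⟨p, hp⟩
  · exact absurd ho.symm hc
  refine ⟨p, ⟨hp, ho⟩, fun q ⟨hq, hqc⟩ => ?_⟩
  simpa using h.injective (a₁ := some ⟨q, hq⟩) (a₂ := some ⟨p, hp⟩) (hqc.trans ho.symm)

end Ratios

theorem minimal_system_is_difference_set_general (n : ℕ) (z : Fin n → ℂ)
    (hz : ∀ k, ‖z k‖ = 1)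
    (hS : ∀ ν ∈ Finset.Icc 1 (n ^ 2 - n),
      ‖∑ k, z k ^ ν‖ = Real.sqrt ((n : ℝ) - 1)) :
    ∃ (α : ℂ) (a : Fin n → ℤ), ‖α‖ = 1 ∧
      (∀ c : ZMod (n ^ 2 - n + 1), c ≠ 0 →
        ∃! p : Fin n × Fin n,
          p.1 ≠ p.2 ∧ ((a p.1 - a p.2 : ℤ) : ZMod (n ^ 2 - n + 1)) = c) ∧
      ∀ k, z k = α * Complex.exp (2 * Real.pi * Complex.I * (a k : ℝ) / (n ^ 2 - n + 1 : ℝ)) := by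
  set N := n ^ 2 - n + 1 with hN
  have hcard : Fintype.card (PairIndex (Fin n)) = N := by
    rw [card_pairIndex, Fintype.card_fin]
  have hw := norm_ratioFamily hz
  have hs : ∀ s, 0 < s → s < Fintype.card (PairIndex (Fin n)) →
      ∑ o, ratioFamily z o ^ s = 0 := by
    intro s hs0 hsN
    have hsν : s ∈ Icc 1 (n ^ 2 - n) := mem_Icc.mpr ⟨hs0, by omega⟩
    have hn : (1 : ℝ) ≤ n := by
      rcases n with _ | n
      · simp at hsν
      · simp
    rw [sum_ratioFamily_pow hz, hS s hsν, Real.sq_sqrt (by linarith), Fintype.card_fin]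
    push_cast
    ring
  have hroot : ∀ o, ratioFamily z o ^ N = 1 := fun o => by
    simpa [ratioFamily, hcard] using conj_mul_pow_card_eq_one hw hs none o
  obtain ⟨α, c, hα, hzc⟩ := exists_eq_mul_stdAddChar hz hroot
  have hbij : Function.Bijective (differenceFamily fun k => (c k : ZMod N)) := by
    refine (Fintype.bijective_iff_injective_and_card _).mpr ⟨?_, by rw [hcard, ZMod.card]⟩
    have hinj := injective_of_sum_pow_eq_zero hw hs
    rw [ratioFamily_eq_stdAddChar_comp hα hzc] at hinj
    exact hinj.of_comp
  refine ⟨α, c, hα, fun d hd => ?_, fun k => ?_⟩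
  · simpa using existsUnique_sub_eq_of_bijective hbij hd
  · rw [hzc k, ZMod.stdAddChar_coe, hN, Nat.cast_add, Nat.cast_sub (Nat.le_self_pow two_ne_zero n)]
    push_cast
    rfl

theorem minimal_system_is_difference_set (n : ℕ) (hn : 2 ≤ n) (z : Fin n → ℂ)
    (hz : ∀ k, ‖z k‖ = 1)
    (hS : ∀ ν ∈ Finset.Icc 1 (n ^ 2 - n),
      ‖∑ k, z k ^ ν‖ = Real.sqrt ((n : ℝ) - 1)) :
    ∃ (α : ℂ) (a : Fin n → ℤ), ‖α‖ = 1 ∧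
      (∀ c : ZMod (n ^ 2 - n + 1), c ≠ 0 →
        ∃! p : Fin n × Fin n,
          p.1 ≠ p.2 ∧ ((a p.1 - a p.2 : ℤ) : ZMod (n ^ 2 - n + 1)) = c) ∧
      ∀ k, z k = α * Complex.exp (2 * Real.pi * Complex.I * (a k : ℝ) / (n ^ 2 - n + 1 : ℝ)) :=
  minimal_system_is_difference_set_general n z hz hS
end

section
/- Let (z_1,...,z_n) be unimodular complex numbers, N = n²−n+1, and write |∑_{k=1}^n z_k^ν|² = n + ∑_{k≠l} e^{2πiν(θ_k−θ_l)} where z_k = e^{2πiθ_k}. Then |∑_{k=1}^n z_k^ν| = √(n−1) for all ν = 1, ..., N−1 if and only if the multiset consisting of 0 together with the N−1 differences θ_k − θ_l (k ≠ l), reduced mod 1, equals the multiset {j/N : j = 0, 1, ..., N−1}. -/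
/-!
Write `e(x) = exp(2πix)` and let `D` be the multiset of the `N` numbers `0` and
`fract (θ_k - θ_l)`, `k ≠ l`. Expanding `S(ν) * conj S(ν)` gives
`|S(ν)|² = (n - 1) + ∑_{x ∈ D} e(x)^ν`, so the left-hand condition says that the `N` points
`e(D)`, one of which is `1`, have vanishing power sums in degrees `1, …, N - 1`. By Newton's
identities their elementary symmetric functions of degrees `1, …, N - 1` vanish, so they are the
roots of `X^N + c`, and the root `1` forces `c = -1`: `e(D)` is the multiset of `N`-th roots of
unity. Conversely the power sums of the `N`-th roots of unity vanish in those degrees. Finally `e`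
is injective on `[0, 1)`, which contains `D` and every `j / N`, so `e(D) = e({j / N})` iff
`D = {j / N}`.
-/

open Finset Complex Real Polynomial ComplexConjugate

section SymmetricFunctions

variable {R : Type*} [CommRing R]

theorem esymm_map_univ_eq_zero_of_sum_pow_eq_zero [IsDomain R] [CharZero R] {σ : Type*}
    [Fintype σ] (x : σ → R) {k : ℕ} (hk : 0 < k) (h : ∀ ν ∈ Icc 1 k, ∑ i, x i ^ ν = 0) :
    (univ.val.map x).esymm k = 0 := by
  have newton := congrArg (MvPolynomial.aeval x) (MvPolynomial.mul_esymm_eq_sum σ R k)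
  simp only [map_mul, map_natCast, MvPolynomial.aeval_esymm_eq_multiset_esymm, map_sum,
    map_pow, map_neg, map_one, MvPolynomial.psum, MvPolynomial.aeval_X] at newton
  rw [Finset.sum_eq_zero fun a ha => ?_, mul_zero] at newton
  · exact (mul_eq_zero.mp newton).resolve_left (Nat.cast_ne_zero.mpr hk.ne')
  · rw [mem_filter, HasAntidiagonal.mem_antidiagonal] at ha
    rw [h a.2 (mem_Icc.mpr ⟨by omega, by omega⟩), mul_zero]

theorem Multiset.esymm_eq_zero_of_sum_map_pow_eq_zero [IsDomain R] [CharZero R]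
    (s : Multiset R) {k : ℕ} (hk : 0 < k) (h : ∀ ν ∈ Icc 1 k, (s.map (· ^ ν)).sum = 0) :
    s.esymm k = 0 := by
  obtain ⟨l, rfl⟩ : ∃ l : List R, ↑l = s := ⟨s.toList, s.coe_toList⟩
  have hl : (l : Multiset R) = univ.val.map l.get := by rw [Fin.univ_val_map, List.ofFn_get]
  rw [hl] at h ⊢
  exact esymm_map_univ_eq_zero_of_sum_pow_eq_zero l.get hk fun ν hν => by
    rw [← h ν hν, Multiset.map_map]; rfl

theorem Multiset.prod_X_sub_C_eq_X_pow_add_C_of_esymm_eq_zero (s : Multiset R) {N : ℕ}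
    (hcard : card s = N) (hN : 0 < N) (h : ∀ j ∈ Ioo 0 N, s.esymm j = 0) :
    (s.map fun a => X - C a).prod = X ^ N + C ((-1) ^ N * s.esymm N) := by
  obtain ⟨m, rfl⟩ : ∃ m, N = m + 1 := ⟨N - 1, by omega⟩
  rw [prod_X_sub_X_eq_sum_esymm, hcard, sum_range_succ, sum_range_succ',
    Finset.sum_eq_zero fun j hj => ?_]
  · simp [esymm]
  · rw [h (j + 1) (mem_Ioo.mpr ⟨by omega, by rw [Finset.mem_range] at hj; omega⟩)]; simp

theorem Multiset.eq_nthRoots_one_of_esymm_eq_zero [IsDomain R] (s : Multiset R) {N : ℕ}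
    (hcard : card s = N) (h1 : 1 ∈ s) (h : ∀ j ∈ Ioo 0 N, s.esymm j = 0) :
    s = nthRoots N 1 := by
  have hN : 0 < N := hcard ▸ card_pos_iff_exists_mem.mpr ⟨1, h1⟩
  have hprod := s.prod_X_sub_C_eq_X_pow_add_C_of_esymm_eq_zero hcard hN h
  have hroot : ((s.map fun a => X - C a).prod).eval 1 = 0 := by
    rw [eval_multiset_prod]
    exact prod_eq_zero (mem_map.mpr ⟨X - C 1, mem_map_of_mem _ h1, by simp⟩)
  rw [hprod, eval_add, eval_pow, eval_X, one_pow, eval_C] at hroot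
  rw [nthRoots, ← roots_multiset_prod_X_sub_C s, hprod, eq_neg_of_add_eq_zero_right hroot,
    map_neg, ← sub_eq_add_neg]

theorem Multiset.sum_map_pow_nthRoots_one_eq_zero [IsDomain R] {N : ℕ} {ζ : R}
    (hζ : IsPrimitiveRoot ζ N) {ν : ℕ} (hν : 0 < ν) (hνN : ν < N) :
    ((nthRoots N (1 : R)).map (· ^ ν)).sum = 0 := by
  have hsum : ((nthRoots N (1 : R)).map (· ^ ν)).sum = ∑ j ∈ Finset.range N, (ζ ^ ν) ^ j := by
    rw [hζ.nthRoots_eq (one_pow N), map_map]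
    exact congrArg sum (map_congr rfl fun j _ => by simp [← pow_mul, mul_comm])
  have hgeom := _root_.geom_sum_mul (ζ ^ ν) N
  have hpow : (ζ ^ ν) ^ N = 1 := by rw [← pow_mul, mul_comm, pow_mul, hζ.pow_eq_one, one_pow]
  rw [hpow, sub_self] at hgeom
  rw [hsum]
  exact (mul_eq_zero.mp hgeom).resolve_right
    (sub_ne_zero.mpr (hζ.pow_ne_one_of_pos_of_lt hν.ne' hνN))

theorem Multiset.eq_nthRoots_one_iff_sum_map_pow_eq_zero [IsDomain R] [CharZero R] {N : ℕ}
    {ζ : R} (hζ : IsPrimitiveRoot ζ N) {s : Multiset R} (hcard : card s = N) (h1 : 1 ∈ s) :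
    s = nthRoots N 1 ↔ ∀ ν ∈ Icc 1 (N - 1), (s.map (· ^ ν)).sum = 0 := by
  refine ⟨?_, fun h => s.eq_nthRoots_one_of_esymm_eq_zero hcard h1 fun j hj => ?_⟩
  · rintro rfl ν hν
    rw [mem_Icc] at hν
    exact sum_map_pow_nthRoots_one_eq_zero hζ (by omega) (by omega)
  · rw [mem_Ioo] at hj
    exact s.esymm_eq_zero_of_sum_map_pow_eq_zero hj.1 fun ν hν => h ν (by rw [mem_Icc] at hν ⊢; omega)

theorem Multiset.map_eq_map_iff_of_injOn {α β : Type*} [Nonempty α] {f : α → β} {S : Set α}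
    (hf : Set.InjOn f S) {s t : Multiset α} (hs : ∀ x ∈ s, x ∈ S) (ht : ∀ x ∈ t, x ∈ S) :
    s.map f = t.map f ↔ s = t := by
  refine ⟨fun h => ?_, congrArg _⟩
  have hinv : ∀ u : Multiset α, (∀ x ∈ u, x ∈ S) → (u.map f).map (Function.invFunOn f S) = u :=
    fun u hu => by
      rw [map_map]
      exact (map_congr rfl fun x hx => hf.leftInvOn_invFunOn (hu x hx)).trans (map_id' u)
  rw [← hinv s hs, h, hinv t ht]

end SymmetricFunctions

noncomputable def expTwoPiI (x : ℝ) : ℂ := Complex.exp (2 * π * I * x)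

theorem expTwoPiI_zero : expTwoPiI 0 = 1 := by simp [expTwoPiI]

theorem expTwoPiI_fract (x : ℝ) : expTwoPiI (Int.fract x) = expTwoPiI x := by
  rw [expTwoPiI, expTwoPiI, Int.fract, ofReal_sub, mul_sub, Complex.exp_sub, ofReal_intCast,
    mul_comm _ (⌊x⌋ : ℂ), exp_int_mul_two_pi_mul_I, div_one]

theorem expTwoPiI_mul_conj (a b : ℝ) :
    expTwoPiI a * conj (expTwoPiI b) = expTwoPiI (a - b) := by
  rw [expTwoPiI, expTwoPiI, expTwoPiI, ← Complex.exp_conj, ← Complex.exp_add]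
  congr 1
  simp only [map_mul, conj_I, conj_ofReal, map_ofNat, ofReal_sub]
  ring

theorem expTwoPiI_injOn : Set.InjOn expTwoPiI (Set.Ico 0 1) := by
  intro a ha b hb hab
  obtain ⟨m, hm⟩ := Complex.exp_eq_exp_iff_exists_int.mp hab
  have h2π : (2 * π * I : ℂ) ≠ 0 := by simp [Real.pi_ne_zero, I_ne_zero]
  have hm' : a = b + m := by
    exact_mod_cast mul_left_cancel₀ h2π (hm.trans (by ring) : _ = 2 * π * I * (b + m : ℂ))
  have hm1 : m < 1 := by exact_mod_cast (by linarith [ha.2, hb.1] : (m : ℝ) < 1)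
  have hm2 : -1 < m := by exact_mod_cast (by linarith [ha.1, hb.2] : (-1 : ℝ) < m)
  rw [hm', show m = 0 by omega, Int.cast_zero, add_zero]

theorem expTwoPiI_natCast_div (N j : ℕ) :
    expTwoPiI (j / N) = Complex.exp (2 * π * I / N) ^ j := by
  rw [expTwoPiI, ← Complex.exp_nat_mul]
  congr 1
  push_cast
  ring

section Differences

variable {ι : Type*} [Fintype ι] [DecidableEq ι]

noncomputable def fractDifferences (θ : ι → ℝ) : Multiset ℝ :=
  (0 : ℝ) ::ₘ (univ.filter fun p : ι × ι => p.1 ≠ p.2).val.map fun p => Int.fract (θ p.1 - θ p.2)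

theorem card_fractDifferences (θ : ι → ℝ) :
    Multiset.card (fractDifferences θ) = Fintype.card ι ^ 2 - Fintype.card ι + 1 := by
  have hoff : (univ.filter fun p : ι × ι => p.1 ≠ p.2) = (univ : Finset ι).offDiag := by
    ext p; simp
  rw [fractDifferences, Multiset.card_cons, Multiset.card_map, ← Finset.card_def, hoff,
    offDiag_card, card_univ, sq]

theorem mem_Ico_of_mem_fractDifferences {θ : ι → ℝ} {x : ℝ} (hx : x ∈ fractDifferences θ) :
    x ∈ Set.Ico 0 1 := by
  rcases Multiset.mem_cons.mp hx with rfl | hx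
  · simp
  · obtain ⟨p, -, rfl⟩ := Multiset.mem_map.mp hx
    exact ⟨Int.fract_nonneg _, Int.fract_lt_one _⟩

theorem sum_pow_mul_conj_eq (θ : ι → ℝ) (ν : ℕ) :
    (∑ k, expTwoPiI (θ k) ^ ν) * conj (∑ k, expTwoPiI (θ k) ^ ν) =
      (Fintype.card ι - 1 : ℂ) + (((fractDifferences θ).map expTwoPiI).map (· ^ ν)).sum := by
  have hpairs : (∑ k, expTwoPiI (θ k) ^ ν) * conj (∑ k, expTwoPiI (θ k) ^ ν) =
      ∑ p : ι × ι, expTwoPiI (θ p.1 - θ p.2) ^ ν := by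
    rw [map_sum, sum_mul_sum, ← Finset.sum_product', univ_product_univ]
    refine sum_congr rfl fun p _ => ?_
    rw [map_pow, ← mul_pow, expTwoPiI_mul_conj]
  have hdiag : ∑ p ∈ univ.filter fun p : ι × ι => p.1 = p.2, expTwoPiI (θ p.1 - θ p.2) ^ ν =
      Fintype.card ι := by
    rw [sum_congr rfl fun p hp => by rw [(mem_filter.mp hp).2, sub_self, expTwoPiI_zero, one_pow],
      sum_const, nsmul_one]
    have : (univ.filter fun p : ι × ι => p.1 = p.2) = (univ : Finset ι).diag := by
      ext p; simp [mem_diag]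
    rw [this, diag_card, card_univ]
  have hmultiset : (((fractDifferences θ).map expTwoPiI).map (· ^ ν)).sum =
      1 + ∑ p ∈ univ.filter fun p : ι × ι => p.1 ≠ p.2, expTwoPiI (θ p.1 - θ p.2) ^ ν := by
    simp only [fractDifferences, Multiset.map_cons, Multiset.sum_cons, expTwoPiI_zero, one_pow,
      Multiset.map_map, Function.comp_def, expTwoPiI_fract]
    rfl
  rw [hpairs, ← sum_filter_add_sum_filter_not univ fun p : ι × ι => p.1 = p.2, hdiag, hmultiset]
  ring

theorem norm_sum_pow_eq_sqrt_iff (θ : ι → ℝ) (hι : 1 ≤ Fintype.card ι) (ν : ℕ) :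
    ‖∑ k, expTwoPiI (θ k) ^ ν‖ = √(Fintype.card ι - 1) ↔
      (((fractDifferences θ).map expTwoPiI).map (· ^ ν)).sum = 0 := by
  have hι' : (0 : ℝ) ≤ Fintype.card ι - 1 := by
    rw [sub_nonneg]; exact_mod_cast hι
  rw [eq_comm, Real.sqrt_eq_iff_eq_sq hι' (norm_nonneg _), ← ofReal_inj, ofReal_pow,
    ← mul_conj', sum_pow_mul_conj_eq]
  push_cast
  exact left_eq_add

end Differences

theorem map_expTwoPiI_range_div {N : ℕ} (hN : N ≠ 0) :
    ((Multiset.range N).map fun j : ℕ => (j : ℝ) / N).map expTwoPiI = nthRoots N 1 := by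
  rw [(Complex.isPrimitiveRoot_exp N hN).nthRoots_eq (one_pow N), Multiset.map_map]
  exact Multiset.map_congr rfl fun j _ => by simp [expTwoPiI_natCast_div]

theorem mem_Ico_of_mem_range_div {N : ℕ} {x : ℝ}
    (hx : x ∈ (Multiset.range N).map fun j : ℕ => (j : ℝ) / N) : x ∈ Set.Ico 0 1 := by
  obtain ⟨j, hj, rfl⟩ := Multiset.mem_map.mp hx
  have hjN : (j : ℝ) < N := by exact_mod_cast Multiset.mem_range.mp hj
  exact ⟨by positivity, (div_lt_one (j.cast_nonneg.trans_lt hjN)).mpr hjN⟩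

theorem power_sums_iff_differences_multiset (n : ℕ) (hn : 2 ≤ n) (N : ℕ)
    (hN : N = n ^ 2 - n + 1) (θ : Fin n → ℝ) (z : Fin n → ℂ)
    (hzdef : ∀ k, z k = Complex.exp (2 * Real.pi * Complex.I * (θ k : ℝ))) :
    (∀ ν ∈ Finset.Icc 1 (N - 1),
        ‖∑ k, z k ^ ν‖ = Real.sqrt ((n : ℝ) - 1)) ↔
      (0 : ℝ) ::ₘ
          ((Finset.univ.filter (fun p : Fin n × Fin n => p.1 ≠ p.2)).val.map
            (fun p => Int.fract (θ p.1 - θ p.2))) =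
        (Multiset.range N).map (fun j => (j : ℝ) / N) := by
  obtain rfl : z = fun k => expTwoPiI (θ k) := funext hzdef
  -- In the statement `j : ℝ`, so `Multiset.range N` is cast to `Multiset ℝ` through `bind`.
  have hR : (Multiset.range N).map (fun j => (j : ℝ) / N) =
      (Multiset.range N).map fun j : ℕ => (j : ℝ) / N := by
    simp only [Multiset.pure_def, Multiset.bind_def, Multiset.bind_singleton, Multiset.map_map,
      Function.comp_apply]
  rw [hR]
  set J := (Multiset.range N).map fun j : ℕ => (j : ℝ) / N
  have hcard : Multiset.card ((fractDifferences θ).map expTwoPiI) = N := by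
    rw [Multiset.card_map, card_fractDifferences, Fintype.card_fin, hN]
  have hone : (1 : ℂ) ∈ (fractDifferences θ).map expTwoPiI :=
    Multiset.mem_map.mpr ⟨0, Multiset.mem_cons_self _ _, expTwoPiI_zero⟩
  calc (∀ ν ∈ Icc 1 (N - 1), ‖∑ k, expTwoPiI (θ k) ^ ν‖ = √((n : ℝ) - 1))
      ↔ ∀ ν ∈ Icc 1 (N - 1), (((fractDifferences θ).map expTwoPiI).map (· ^ ν)).sum = 0 :=
        forall₂_congr fun ν _ => by
          simpa using norm_sum_pow_eq_sqrt_iff θ (by rw [Fintype.card_fin]; omega) ν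
    _ ↔ (fractDifferences θ).map expTwoPiI = nthRoots N 1 :=
        (Multiset.eq_nthRoots_one_iff_sum_map_pow_eq_zero
          (Complex.isPrimitiveRoot_exp N (by omega)) hcard hone).symm
    _ ↔ (fractDifferences θ).map expTwoPiI = J.map expTwoPiI := by
        rw [map_expTwoPiI_range_div (by omega)]
    _ ↔ fractDifferences θ = J :=
        Multiset.map_eq_map_iff_of_injOn expTwoPiI_injOn
          (fun _ => mem_Ico_of_mem_fractDifferences) fun _ => mem_Ico_of_mem_range_div
end

section
/- Suppose n−1 is a prime power and (z_1,...,z_n) is an n-tuple of unimodular complex numbers achieving max_{ν=1,...,n²−n} |∑_{k=1}^n z_k^ν| = √(n−1). Then there exist α with |α| = 1 and a perfect difference set (a_1,...,a_n) of order n−1 such that z_k = α·e^{2πi a_k/(n²−n+1)} for all k. -/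
open Finset Complex Real
open ComplexConjugate

/-!
Put `N = n² - n + 1`, `T m = ∑ₖ z_k ^ m` and `D j k = ∑_{ν<N} (z_j conj z_k) ^ ν`. The two Gram
matrices of the `n × N` matrix `(z_k ^ ν)` have the same Frobenius norm:
`∑_{ν,μ<N} |T (μ - ν)|² = ∑_{j,k} |D j k|²`. The diagonal `D j j = N` makes the right side at
least `n N²`, while `|T m|² ≤ n - 1` for `0 < |m| < N` bounds the left side by
`N (n² + (N - 1)(n - 1)) = n N²`. Hence both bounds are attained: `D j k = 0` for `j ≠ k`, so every
`z_j conj z_k` is an `N`-th root of unity, and `|T m|² = n - 1` for `0 < m < N`, which by Fourier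
inversion on `ZMod N` says that every nonzero residue is a difference `a_j - a_k` exactly once.
-/

theorem Nat.cast_sq_sub_add_one {R : Type*} [Ring R] (n : ℕ) :
    ((n ^ 2 - n + 1 : ℕ) : R) = n ^ 2 - n + 1 := by
  push_cast [Nat.cast_sub (Nat.le_self_pow two_ne_zero n)]
  rfl

theorem sum_normSq_gram_eq {ι κ : Type*} [Fintype ι] [Fintype κ] (x : ι → κ → ℂ) :
    ∑ ν, ∑ μ, normSq (∑ k, conj (x k ν) * x k μ) =
      ∑ j, ∑ k, normSq (∑ ν, x j ν * conj (x k ν)) := by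
  -- both sides expand to `∑ j k ν μ, x j ν * conj (x k ν) * conj (x j μ) * x k μ`
  apply Complex.ofReal_injective
  simp only [ofReal_sum, ← mul_conj, map_sum, map_mul, conj_conj, sum_mul_sum]
  conv_lhs => enter [2, ν, 2, μ]; rw [sum_comm]
  conv_lhs => enter [2, ν]; rw [sum_comm]
  rw [sum_comm]
  conv_lhs => enter [2, j, 2, ν]; rw [sum_comm]
  conv_lhs => enter [2, j]; rw [sum_comm]
  exact sum_congr rfl fun j _ => sum_congr rfl fun k _ =>
    sum_congr rfl fun ν _ => sum_congr rfl fun μ _ => by ring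

theorem sum_sum_ite_eq_diag {α : Type*} [Fintype α] [DecidableEq α] (a b : ℝ) :
    ∑ i : α, ∑ j : α, (if i = j then a else b) =
      Fintype.card α * a + (Fintype.card α ^ 2 - Fintype.card α) * b := by
  have h (i j : α) : (if i = j then a else b) = b + if i = j then a - b else 0 := by
    split_ifs <;> ring
  simp only [h, sum_add_distrib, sum_ite_eq, mem_univ, if_true, sum_const, card_univ,
    nsmul_eq_mul]
  ring

theorem eq_of_le_of_sum_sum_le {α β : Type*} [Fintype α] [Fintype β] {f g : α → β → ℝ}
    (hle : ∀ a b, f a b ≤ g a b) (hsum : ∑ a, ∑ b, g a b ≤ ∑ a, ∑ b, f a b) :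
    ∀ a b, f a b = g a b := by
  simp only [← Fintype.sum_prod_type'] at hsum
  intro a b
  exact (sum_eq_sum_iff_of_le fun p _ => hle p.1 p.2).mp
    (le_antisymm (sum_le_sum fun p _ => hle p.1 p.2) hsum) (a, b) (mem_univ _)

section Unimodular

variable {ι : Type*} {z : ι → ℂ}

theorem sum_zpow_neg_of_norm_eq_one [Fintype ι] (hz : ∀ k, ‖z k‖ = 1) (m : ℤ) :
    ∑ k, z k ^ (-m) = conj (∑ k, z k ^ m) := by
  simp only [map_sum, map_zpow₀, ← inv_eq_conj (hz _), zpow_neg, inv_zpow]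

theorem normSq_sum_zpow_eq_natAbs [Fintype ι] (hz : ∀ k, ‖z k‖ = 1) (m : ℤ) :
    normSq (∑ k, z k ^ m) = normSq (∑ k, z k ^ m.natAbs) := by
  rcases Int.natAbs_eq m with h | h
  · conv_lhs => rw [h]
    simp only [zpow_natCast]
  · conv_lhs => rw [h]
    simp only [sum_zpow_neg_of_norm_eq_one hz, normSq_conj, zpow_natCast]

theorem sum_normSq_sum_zpow_sub_eq [Fintype ι] (hz : ∀ k, ‖z k‖ = 1) (N : ℕ) :
    ∑ ν : Fin N, ∑ μ : Fin N, normSq (∑ k, z k ^ ((μ : ℤ) - ν)) =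
      ∑ j, ∑ k, normSq (∑ ν ∈ range N, (z j * conj (z k)) ^ ν) := by
  have hentry (k : ι) (ν μ : Fin N) :
      conj (z k ^ (ν : ℕ)) * z k ^ (μ : ℕ) = z k ^ ((μ : ℤ) - ν) := by
    rw [zpow_sub₀ (ne_zero_of_norm_ne_zero (by simp [hz k])), map_pow, ← inv_eq_conj (hz k)]
    simp [div_eq_inv_mul]
  calc _ = ∑ ν : Fin N, ∑ μ : Fin N, normSq (∑ k, conj (z k ^ (ν : ℕ)) * z k ^ (μ : ℕ)) := by
        simp only [hentry]
    _ = ∑ j, ∑ k, normSq (∑ ν : Fin N, z j ^ (ν : ℕ) * conj (z k ^ (ν : ℕ))) :=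
        sum_normSq_gram_eq _
    _ = _ := by
        simp only [map_pow, ← mul_pow, Fin.sum_univ_eq_sum_range]

theorem normSq_sum_zpow_sub_le [Fintype ι] (hz : ∀ k, ‖z k‖ = 1) {n : ℕ} (hn : Fintype.card ι = n)
    (hbound : ∀ m ∈ Icc 1 (n ^ 2 - n), normSq (∑ k, z k ^ m) ≤ n - 1) (ν μ : Fin (n ^ 2 - n + 1)) :
    normSq (∑ k, z k ^ ((μ : ℤ) - ν)) ≤ if ν = μ then (n : ℝ) ^ 2 else n - 1 := by
  split_ifs with h
  · simp [h, hn, sq]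
  · rw [normSq_sum_zpow_eq_natAbs hz]
    refine hbound _ (mem_Icc.mpr ⟨?_, ?_⟩)
    · have := Fin.val_ne_of_ne h
      omega
    · have := μ.is_lt
      have := ν.is_lt
      omega

theorem le_normSq_geom_sum_mul_conj (hz : ∀ k, ‖z k‖ = 1) (N : ℕ) [DecidableEq ι] (j k : ι) :
    (if j = k then (N : ℝ) ^ 2 else 0) ≤ normSq (∑ ν ∈ range N, (z j * conj (z k)) ^ ν) := by
  split_ifs with h
  · simp [h, mul_conj, normSq_eq_norm_sq, hz k]
  · exact normSq_nonneg _

theorem geom_sum_mul_conj_eq_zero_and_normSq_sum_pow_eq [Fintype ι] (hz : ∀ k, ‖z k‖ = 1)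
    {n : ℕ} (hn : Fintype.card ι = n)
    (hbound : ∀ m ∈ Icc 1 (n ^ 2 - n), normSq (∑ k, z k ^ m) ≤ n - 1) :
    (∀ j k, j ≠ k → ∑ ν ∈ range (n ^ 2 - n + 1), (z j * conj (z k)) ^ ν = 0) ∧
      ∀ m ∈ Icc 1 (n ^ 2 - n), normSq (∑ k, z k ^ m) = n - 1 := by
  classical
  have hf := normSq_sum_zpow_sub_le hz hn hbound
  have hg := le_normSq_geom_sum_mul_conj (z := z) hz (n ^ 2 - n + 1)
  have hsum_f := sum_le_sum fun ν (_ : ν ∈ univ) => sum_le_sum fun μ (_ : μ ∈ univ) => hf ν μ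
  have hsum_g := sum_le_sum fun j (_ : j ∈ univ) => sum_le_sum fun k (_ : k ∈ univ) => hg j k
  have hgram := sum_normSq_sum_zpow_sub_eq hz (n ^ 2 - n + 1)
  have hdiag : ∑ ν : Fin (n ^ 2 - n + 1), ∑ μ : Fin (n ^ 2 - n + 1),
      (if ν = μ then (n : ℝ) ^ 2 else n - 1) =
      ∑ j : ι, ∑ k : ι, (if j = k then ((n ^ 2 - n + 1 : ℕ) : ℝ) ^ 2 else 0) := by
    rw [sum_sum_ite_eq_diag, sum_sum_ite_eq_diag, Fintype.card_fin, hn, Nat.cast_sq_sub_add_one]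
    ring
  refine ⟨fun j k hjk => ?_, fun m hm => ?_⟩
  · have := eq_of_le_of_sum_sum_le hg (by linarith) j k
    rw [if_neg hjk] at this
    exact normSq_eq_zero.mp this.symm
  · obtain ⟨hm1, hmN⟩ := mem_Icc.mp hm
    have h0m : (0 : Fin (n ^ 2 - n + 1)) ≠ ⟨m, by omega⟩ :=
      Fin.ne_of_val_ne (by simp only [Fin.val_zero]; omega)
    simpa [h0m] using eq_of_le_of_sum_sum_le hf (by linarith) 0 ⟨m, by omega⟩

end Unimodular

theorem pow_eq_one_of_geom_sum_eq_zero {R : Type*} [Ring R] {w : R} {N : ℕ}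
    (h : ∑ ν ∈ range N, w ^ ν = 0) : w ^ N = 1 := by
  rw [← sub_eq_zero, ← geom_sum_mul, h, zero_mul]

theorem ZMod.exists_stdAddChar_intCast_eq {N : ℕ} [NeZero N] {w : ℂ} (hw : w ^ N = 1) :
    ∃ a : ℤ, ZMod.stdAddChar (a : ZMod N) = w := by
  obtain ⟨i, -, rfl⟩ :=
    (Complex.isPrimitiveRoot_exp N (NeZero.ne N)).eq_pow_of_pow_eq_one hw
  refine ⟨i, ?_⟩
  rw [ZMod.stdAddChar_coe, ← Complex.exp_nat_mul]
  push_cast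
  ring_nf

theorem exists_eq_mul_stdAddChar_of_pow_eq_one {N : ℕ} [NeZero N] {ι : Type*} {z : ι → ℂ} {α : ℂ}
    (hα : ‖α‖ = 1) (h : ∀ k, (z k * conj α) ^ N = 1) :
    ∃ a : ι → ℤ, ∀ k, z k = α * ZMod.stdAddChar (a k : ZMod N) := by
  choose a ha using fun k => ZMod.exists_stdAddChar_intCast_eq (h k)
  refine ⟨a, fun k => ?_⟩
  rw [ha, mul_left_comm, mul_conj, normSq_eq_norm_sq, hα, one_pow, ofReal_one, mul_one]

theorem normSq_sum_stdAddChar_mul_natCast {N : ℕ} [NeZero N] {ι : Type*} [Fintype ι]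
    {z : ι → ℂ} {α : ℂ} (hα : ‖α‖ = 1) {b : ι → ZMod N}
    (hzb : ∀ k, z k = α * ZMod.stdAddChar (b k)) (m : ℕ) :
    normSq (∑ k, ZMod.stdAddChar (b k * (m : ZMod N))) = normSq (∑ k, z k ^ m) := by
  simp only [hzb, mul_pow, ← mul_sum, normSq_mul, map_pow, normSq_eq_norm_sq α, hα, one_pow,
    one_mul, ← AddChar.map_nsmul_eq_pow, nsmul_eq_mul, mul_comm]

theorem ZMod.natCast_mul_card_sub_eq {N : ℕ} [NeZero N] {ι : Type*} [Fintype ι] (b : ι → ZMod N)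
    (c : ZMod N) :
    (N : ℂ) * #{p : ι × ι | b p.1 - b p.2 = c} =
      ∑ ν : ZMod N, stdAddChar (-(c * ν)) * normSq (∑ k, stdAddChar (b k * ν)) := by
  have hexpand (ν : ZMod N) : stdAddChar (-(c * ν)) * normSq (∑ k, stdAddChar (b k * ν)) =
      ∑ j, ∑ k, stdAddChar (ν * (b j - b k - c)) := by
    rw [← mul_conj, map_sum, sum_mul_sum, mul_sum]
    refine sum_congr rfl fun j _ => ?_
    rw [mul_sum]
    refine sum_congr rfl fun k _ => ?_
    rw [← AddChar.map_neg_eq_conj, ← AddChar.map_add_eq_mul, ← AddChar.map_add_eq_mul]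
    ring_nf
  have horth (j k : ι) : ∑ ν : ZMod N, stdAddChar (ν * (b j - b k - c)) =
      if b j - b k = c then (N : ℂ) else 0 := by
    rw [AddChar.sum_mulShift _ (isPrimitive_stdAddChar N)]
    simp [sub_eq_zero]
  rw [sum_congr rfl fun ν _ => hexpand ν, sum_comm]
  simp only [natCast_card_filter, mul_sum, Fintype.sum_prod_type, mul_ite, mul_one, mul_zero]
  refine sum_congr rfl fun j _ => ?_
  rw [sum_comm]
  exact sum_congr rfl fun k _ => (horth j k).symm

theorem ZMod.existsUnique_sub_eq_of_normSq_sum_stdAddChar {ι : Type*} [Fintype ι] {n : ℕ}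
    (hn : Fintype.card ι = n) (b : ι → ZMod (n ^ 2 - n + 1))
    (hS : ∀ ν ≠ 0, normSq (∑ k, stdAddChar (b k * ν)) = n - 1) {c : ZMod (n ^ 2 - n + 1)}
    (hc : c ≠ 0) : ∃! p : ι × ι, p.1 ≠ p.2 ∧ b p.1 - b p.2 = c := by
  have hS' (ν : ZMod (n ^ 2 - n + 1)) : (normSq (∑ k, stdAddChar (b k * ν)) : ℂ) =
      (n - 1) + if ν = 0 then ((n ^ 2 - n + 1 : ℕ) : ℂ) else 0 := by
    split_ifs with hν
    · rw [hν, Nat.cast_sq_sub_add_one]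
      simp [hn, sq]
    · simp [hS ν hν]
  have horth : ∑ ν : ZMod (n ^ 2 - n + 1), stdAddChar (-(c * ν)) = 0 := by
    simp only [show ∀ ν, -(c * ν) = ν * -c from fun ν => by ring,
      AddChar.sum_mulShift _ (isPrimitive_stdAddChar _), neg_eq_zero, hc, if_false, Nat.cast_zero]
  have hcard : #{p : ι × ι | b p.1 - b p.2 = c} = 1 := by
    have h := ZMod.natCast_mul_card_sub_eq b c
    simp only [hS', mul_add, mul_ite, mul_zero, sum_add_distrib, ← sum_mul, sum_ite_eq',
      mem_univ, if_true, neg_zero, AddChar.map_zero_eq_one, one_mul, horth, zero_mul,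
      zero_add] at h
    exact_mod_cast mul_left_cancel₀ (Nat.cast_ne_zero.mpr (NeZero.ne (n ^ 2 - n + 1)))
      (h.trans (mul_one _).symm)
  obtain ⟨p, hp⟩ := card_eq_one.mp hcard
  have hmem (q : ι × ι) : b q.1 - b q.2 = c ↔ q = p := by
    simpa using congrArg (q ∈ ·) hp
  refine ⟨p, ⟨fun h => hc ?_, (hmem p).2 rfl⟩, fun q hq => (hmem q).1 hq.2⟩
  rw [← (hmem p).2 rfl, h, sub_self]

theorem minimizer_is_fabrykowski (n : ℕ) (hn : 2 ≤ n)
    (z : Fin n → ℂ) (hz : ∀ k, ‖z k‖ = 1)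
    (hmax : (Finset.Icc 1 (n ^ 2 - n)).sup'
        (Finset.nonempty_Icc.mpr (Nat.le_sub_of_add_le (by nlinarith)))
        (fun ν => ‖∑ k, z k ^ ν‖) = Real.sqrt ((n : ℝ) - 1)) :
    ∃ (α : ℂ) (a : Fin n → ℤ), ‖α‖ = 1 ∧
      (∀ c : ZMod (n ^ 2 - n + 1), c ≠ 0 →
        ∃! p : Fin n × Fin n,
          p.1 ≠ p.2 ∧ ((a p.1 - a p.2 : ℤ) : ZMod (n ^ 2 - n + 1)) = c) ∧
      ∀ k, z k = α * Complex.exp (2 * Real.pi * Complex.I * (a k : ℝ) / (n ^ 2 - n + 1 : ℝ)) := by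
  have hbound : ∀ m ∈ Icc 1 (n ^ 2 - n), normSq (∑ k, z k ^ m) ≤ n - 1 := fun m hm => by
    have hn1 : (0 : ℝ) ≤ n - 1 := sub_nonneg.mpr (by exact_mod_cast Nat.one_le_of_lt hn)
    rw [normSq_eq_norm_sq, ← Real.le_sqrt (norm_nonneg _) hn1, ← hmax]
    exact le_sup' (fun ν => ‖∑ k, z k ^ ν‖) hm
  obtain ⟨hD, hT⟩ :=
    geom_sum_mul_conj_eq_zero_and_normSq_sum_pow_eq hz (Fintype.card_fin n) hbound
  let k₀ : Fin n := ⟨0, by omega⟩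
  obtain ⟨a, ha⟩ :=
      exists_eq_mul_stdAddChar_of_pow_eq_one (N := n ^ 2 - n + 1) (z := z) (hz k₀) fun k => by
      by_cases hk : k = k₀
      · simp [hk, mul_conj, normSq_eq_norm_sq, hz k₀]
      · exact pow_eq_one_of_geom_sum_eq_zero (hD k k₀ hk)
  refine ⟨z k₀, a, hz k₀, fun c hc => ?_, fun k => ?_⟩
  · have hS : ∀ ν ≠ 0,
        normSq (∑ k, ZMod.stdAddChar ((a k : ZMod (n ^ 2 - n + 1)) * ν)) = n - 1 := by
      intro ν hν
      rw [← ZMod.natCast_zmod_val ν, normSq_sum_stdAddChar_mul_natCast (hz k₀) ha]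
      have := ZMod.val_lt ν
      exact hT _ (mem_Icc.mpr ⟨ZMod.val_pos.mpr hν, by omega⟩)
    simpa only [Int.cast_sub] using
      ZMod.existsUnique_sub_eq_of_normSq_sum_stdAddChar (Fintype.card_fin n) _ hS hc
  · rw [ha k, ZMod.stdAddChar_coe, Nat.cast_sq_sub_add_one]
    push_cast
    rfl
end

section
/- Let N ≥ 1 and let λ_1, ..., λ_N be complex numbers of modulus 1 such that ∑_{j=1}^N λ_j^ν = 0 for all ν = 1, ..., N−1, and suppose λ_1 = 1. Then {λ_1, ..., λ_N} is exactly the set of N-th roots of unity. -/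
/-!
By Newton's identities, the vanishing of the power sums `p₁, …, p_{N-1}` of the `λⱼ` forces the
elementary symmetric functions `e₁, …, e_{N-1}` to vanish, so `∏ⱼ (X - λⱼ) = X ^ N + c`.
Since `1` is a root, `c = -1`: the `λⱼ` are exactly the roots of `X ^ N - 1`.
-/

open Finset Polynomial

theorem Multiset.esymm_map_eq_zero_of_sum_pow_eq_zero {σ R : Type*} [Fintype σ] [CommRing R]
    [IsDomain R] [CharZero R] (x : σ → R) (n : ℕ) (hx : ∀ k ∈ Icc 1 n, ∑ i, x i ^ k = 0) :
    ∀ k ∈ Icc 1 n, (univ.val.map x).esymm k = 0 := by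
  intro k hk
  induction k using Nat.strong_induction_on with
  | _ k ih =>
    have hnewton := congrArg (MvPolynomial.aeval x) (MvPolynomial.mul_esymm_eq_sum σ R k)
    simp only [map_mul, map_natCast, map_pow, map_neg, map_one, map_sum, MvPolynomial.psum,
      MvPolynomial.aeval_esymm_eq_multiset_esymm, MvPolynomial.aeval_X] at hnewton
    rw [Finset.sum_eq_zero, mul_zero] at hnewton
    · exact (mul_eq_zero.mp hnewton).resolve_left (Nat.cast_ne_zero.mpr (by simp at hk; omega))
    rintro ⟨i, j⟩ ha
    simp only [Finset.mem_filter, Finset.HasAntidiagonal.mem_antidiagonal] at ha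
    rcases Nat.eq_zero_or_pos i with rfl | hi
    · rw [hx j (by simp at hk ⊢; omega), mul_zero]
    · rw [ih i ha.2 (by simp at hk ⊢; omega), mul_zero, zero_mul]

theorem Multiset.prod_X_sub_C_eq_X_pow_add_C {R : Type*} [CommRing R] (s : Multiset R)
    (hs : 0 < card s) (he : ∀ k ∈ Icc 1 (card s - 1), s.esymm k = 0) :
    (s.map fun a => X - C a).prod = X ^ card s + C ((-1) ^ card s * s.esymm (card s)) := by
  obtain ⟨m, hm⟩ : ∃ m, card s = m + 1 := ⟨card s - 1, by omega⟩
  have hmiddle : ∀ j ∈ range m,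
      (-1) ^ (j + 1) * (C (s.esymm (j + 1)) * X ^ (m + 1 - (j + 1))) = (0 : R[X]) := by
    intro j hj
    rw [he (j + 1) (by simp at hj ⊢; omega), C_0, zero_mul, mul_zero]
  rw [prod_X_sub_X_eq_sum_esymm, hm, sum_range_succ, sum_range_succ', Finset.sum_eq_zero hmiddle]
  simp only [Nat.sub_zero, Nat.sub_self, pow_zero, zero_add, one_mul, mul_one, esymm,
    powersetCard_zero_left, map_singleton, prod_zero, sum_singleton, C_1, C_mul, C_pow, C_neg]

theorem Multiset.prod_X_sub_C_eq_X_pow_sub_one {R : Type*} [CommRing R] (s : Multiset R)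
    (h1 : 1 ∈ s) (he : ∀ k ∈ Icc 1 (card s - 1), s.esymm k = 0) :
    (s.map fun a => X - C a).prod = X ^ card s - 1 := by
  have hP := s.prod_X_sub_C_eq_X_pow_add_C (card_pos_iff_exists_mem.mpr ⟨1, h1⟩) he
  have hroot : (s.map fun a => X - C a).prod.eval 1 = 0 := by
    rw [eval_multiset_prod]
    exact Multiset.prod_eq_zero (by simpa using ⟨1, h1, by simp⟩)
  rw [hP, eval_add, eval_pow, eval_X, one_pow, eval_C, add_comm, ← eq_neg_iff_add_eq_zero] at hroot
  rw [hP, hroot, C_neg, C_1, sub_eq_add_neg]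

theorem roots_of_unity_of_power_sums_vanish_general (N : ℕ) (hN : 0 < N) (lam : Fin N → ℂ)
    (hS : ∀ ν ∈ Finset.Icc 1 (N - 1), ∑ j, lam j ^ ν = 0)
    (h1 : lam ⟨0, hN⟩ = 1) :
    Set.range lam = {x : ℂ | x ^ N = 1} := by
  set s := univ.val.map lam
  have hcard : Multiset.card s = N := by simp [s]
  have hP : (s.map fun a => X - C a).prod = X ^ N - C 1 := by
    rw [C_1, ← hcard]
    refine s.prod_X_sub_C_eq_X_pow_sub_one ?_ ?_
    · exact h1 ▸ Multiset.mem_map_of_mem lam (mem_univ_val _)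
    · exact hcard ▸ Multiset.esymm_map_eq_zero_of_sum_pow_eq_zero lam (N - 1) hS
  ext x
  calc x ∈ Set.range lam ↔ x ∈ s := by simp [s]
    _ ↔ x ∈ nthRoots N (1 : ℂ) := by rw [nthRoots, ← hP, roots_multiset_prod_X_sub_C]
    _ ↔ x ^ N = 1 := mem_nthRoots hN

theorem roots_of_unity_of_power_sums_vanish (N : ℕ) (hN : 0 < N) (lam : Fin N → ℂ)
    (hlam : ∀ j, ‖lam j‖ = 1)
    (hS : ∀ ν ∈ Finset.Icc 1 (N - 1), ∑ j, lam j ^ ν = 0)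
    (h1 : lam ⟨0, hN⟩ = 1) :
    Set.range lam = {x : ℂ | x ^ N = 1} :=
  roots_of_unity_of_power_sums_vanish_general N hN lam hS h1
end
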